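/- arXiv:cs/0401021 — 6 statements merged into one kernel-verified Lean document; each statement's English description precedes it below -/
import Mathlib

section
/- Let d1, d2 ∈ SFL be such that ρ_PSD(d1) = ρ_PSD(d2). Then for every d' ∈ SFL, ρ_PSD(d1 ⊔_S d') = ρ_PSD(d2 ⊔_S d'); i.e., ρ_PSD is a congruence with respect to the least upper bound operator of SFL. -/
open Classical

noncomputable section

/-- The set `SG` of sharing groups over `VI`: nonempty subsets of `VI`. -/
def SG {Vr : Type} (VI : Set Vr) : Set (Set Vr) := {S | S ⊆ VI ∧ S ≠ ∅}

/-- An element of the abstract domain `SFL`: a set-sharing component together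
with a freeness and a linearity component. -/
structure SFLElem (Vr : Type) where
  sh : Set (Set Vr)
  f : Set Vr
  l : Set Vr

/-- Well-formedness of an `SFL` element: `sh ∈ SH = ℘(SG VI)`, `f ⊆ VI`, `l ⊆ VI`. -/
def SFLElem.WF {Vr : Type} (VI : Set Vr) (d : SFLElem Vr) : Prop :=
  d.sh ⊆ SG VI ∧ d.f ⊆ VI ∧ d.l ⊆ VI

/-- The bottom element `⊥_S = ⟨∅, VI, VI⟩` of `SFL`. -/
def botS {Vr : Type} (VI : Set Vr) : SFLElem Vr := ⟨∅, VI, VI⟩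

/-- The order of `SFL`: `⊆` on the sharing component, `⊇` on freeness and linearity. -/
def SFLElem.leS {Vr : Type} (d1 d2 : SFLElem Vr) : Prop :=
  d1.sh ⊆ d2.sh ∧ d2.f ⊆ d1.f ∧ d2.l ⊆ d1.l

/-- The least upper bound of `SFL`. -/
def SFLElem.lubS {Vr : Type} (d1 d2 : SFLElem Vr) : SFLElem Vr :=
  ⟨d1.sh ∪ d2.sh, d1.f ∩ d2.f, d1.l ∩ d2.l⟩

section SHOps

variable {Vr : Type}

/-- The relevant component of `sh` with respect to `V`. -/
def relSH (V : Set Vr) (sh : Set (Set Vr)) : Set (Set Vr) :=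
  {S | S ∈ sh ∧ S ∩ V ≠ ∅}

/-- The irrelevant component of `sh` with respect to `V`. -/
def nrelSH (V : Set Vr) (sh : Set (Set Vr)) : Set (Set Vr) := sh \ relSH V sh

/-- The binary union function on sharing sets. -/
def binSH (sh1 sh2 : Set (Set Vr)) : Set (Set Vr) :=
  {S | ∃ S1 ∈ sh1, ∃ S2 ∈ sh2, S = S1 ∪ S2}

/-- The star-union of a sharing set: all sharing groups that are unions of
finitely many (at least one) elements of `sh`. -/
def starSH (VI : Set Vr) (sh : Set (Set Vr)) : Set (Set Vr) :=
  {S | S ∈ SG VI ∧ ∃ F : Set (Set Vr), F.Finite ∧ F.Nonempty ∧ F ⊆ sh ∧ S = ⋃₀ F}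

/-- The redundancy-removing upper closure operator `ρ_PSD` on sharing sets. -/
def rhoPSDsh (VI : Set Vr) (sh : Set (Set Vr)) : Set (Set Vr) :=
  {S | S ∈ SG VI ∧ ∀ y ∈ S, S = ⋃₀ {U | U ∈ sh ∧ y ∈ U ∧ U ⊆ S}}

/-- `ρ_PSD` on `SFL`: it acts on the sharing component only. -/
def rhoPSD (VI : Set Vr) (d : SFLElem Vr) : SFLElem Vr :=
  ⟨rhoPSDsh VI d.sh, d.f, d.l⟩

end SHOps

/-- Pair characterization of membership in `rhoPSDsh`. -/
lemma mem_rhoPSDsh_iff {Vr : Type} (VI : Set Vr) (sh : Set (Set Vr)) (S : Set Vr) :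
    S ∈ rhoPSDsh VI sh ↔
      S ∈ SG VI ∧ ∀ y ∈ S, ∀ z ∈ S, ∃ U ∈ sh, y ∈ U ∧ z ∈ U ∧ U ⊆ S := by
  constructor
  · rintro ⟨hSG, h⟩
    refine ⟨hSG, fun y hy z hz => ?_⟩
    have := h y hy
    rw [this] at hz
    rcases hz with ⟨U, ⟨hU, hyU, hUS⟩, hzU⟩
    exact ⟨U, hU, hyU, hzU, hUS⟩
  · rintro ⟨hSG, h⟩
    refine ⟨hSG, fun y hy => ?_⟩
    apply Set.Subset.antisymm
    · intro z hz
      rcases h y hy z hz with ⟨U, hU, hyU, hzU, hUS⟩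
      exact ⟨U, ⟨hU, hyU, hUS⟩, hzU⟩
    · intro z hz
      rcases hz with ⟨U, ⟨_, _, hUS⟩, hzU⟩
      exact hUS hzU

lemma subset_rhoPSDsh {Vr : Type} (VI : Set Vr) (sh : Set (Set Vr))
    (hsh : sh ⊆ SG VI) : sh ⊆ rhoPSDsh VI sh := by
  intro U hU
  rw [mem_rhoPSDsh_iff]
  exact ⟨hsh hU, fun y hy z hz => ⟨U, hU, hy, hz, subset_rfl⟩⟩

lemma rhoPSDsh_union_subset {Vr : Type} (VI : Set Vr)
    (sh1 sh2 sh' : Set (Set Vr)) (h1 : sh1 ⊆ SG VI)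
    (heq : rhoPSDsh VI sh1 = rhoPSDsh VI sh2) :
    rhoPSDsh VI (sh1 ∪ sh') ⊆ rhoPSDsh VI (sh2 ∪ sh') := by
  intro S hS
  rw [mem_rhoPSDsh_iff] at hS ⊢
  refine ⟨hS.1, fun y hy z hz => ?_⟩
  rcases hS.2 y hy z hz with ⟨U, hU, hyU, hzU, hUS⟩
  rcases hU with hU | hU
  · have hU2 : U ∈ rhoPSDsh VI sh2 := heq ▸ subset_rhoPSDsh VI sh1 h1 hU
    have := hU2.2 y hyU
    have hz2 : z ∈ ⋃₀ {W | W ∈ sh2 ∧ y ∈ W ∧ W ⊆ U} := this ▸ hzU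
    rcases hz2 with ⟨W, ⟨hW, hyW, hWU⟩, hzW⟩
    exact ⟨W, Or.inl hW, hyW, hzW, hWU.trans hUS⟩
  · exact ⟨U, Or.inr hU, hyU, hzU, hUS⟩

/-- `ρ_PSD` is a congruence with respect to the least upper
bound operator of `SFL`. -/
theorem rhoPSD_congruence_lub
    {Vr : Type} (VI : Set Vr) (_hVI : VI.Finite)
    (d1 d2 d' : SFLElem Vr) (_h1 : d1.WF VI) (_h2 : d2.WF VI) (_h' : d'.WF VI)
    (_hpsd : rhoPSD VI d1 = rhoPSD VI d2) :
    rhoPSD VI (d1.lubS d') = rhoPSD VI (d2.lubS d') := by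
  have hsh : rhoPSDsh VI d1.sh = rhoPSDsh VI d2.sh :=
    congrArg SFLElem.sh _hpsd
  have hf : d1.f = d2.f := (congrArg SFLElem.f _hpsd : (rhoPSD VI d1).f = (rhoPSD VI d2).f)
  have hl : d1.l = d2.l := (congrArg SFLElem.l _hpsd : (rhoPSD VI d1).l = (rhoPSD VI d2).l)
  have hshu : rhoPSDsh VI (d1.sh ∪ d'.sh) = rhoPSDsh VI (d2.sh ∪ d'.sh) :=
    Set.Subset.antisymm
      (rhoPSDsh_union_subset VI _ _ _ _h1.1 hsh)
      (rhoPSDsh_union_subset VI _ _ _ _h2.1 hsh.symm)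
  simp only [rhoPSD, SFLElem.lubS]
  rw [hshu, hf, hl]
end
end

section
/- Let d1 = ⟨sh1, f1, l1⟩ and d2 = ⟨sh2, f2, l2⟩ in SFL be such that ρ_PSD(d1) ≠ ρ_PSD(d2). Then there exist a sequence of bindings bs ∈ Bind* (each binding x ↦ t with {x} ∪ vars(t) ⊆ VI) and an observable ρ ∈ {ρ_Con, ρ_PS, ρ_F, ρ_L} such that ρ(aunify_S(d1, bs)) ≠ ρ(aunify_S(d2, bs)), where aunify_S is taken relative to the rational-tree equality theory. Consequently ρ_PSD(SFL) is the minimal quotient of SFL preserving groundness, independence, freeness and linearity under abstract unification. -/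
/-!
The freeness and linearity components are observed directly by `ρ_F` and `ρ_L`. Otherwise
some group `S` lies in `ρ_PSD(sh₁)` but not in `ρ_PSD(sh₂)`. Binding every variable of
`VI \ S` to a constant erases exactly the groups not contained in `S`. As `S ∉ ρ_PSD(sh₂)`,
there are `y, z ∈ S` such that no group of `sh₂` inside `S` contains both, whereas
`S ∈ ρ_PSD(sh₁)` provides such a group of `sh₁`. If `z` lies in some group of `sh₂` inside
`S`, then `y ≠ z` and `ρ_PS` sees the pair `{y, z}` after grounding only on the `d₁` side;
otherwise `ρ_Con` sees that `z` is nonground only on the `d₁` side.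
-/

open Classical

noncomputable section

/-- Finite terms over a ranked signature `Sig` (with arity function `ar`)
and variables taken from `Vr`. -/
inductive HTerm (Sig : Type) (ar : Sig → ℕ) (Vr : Type) : Type where
  | var : Vr → HTerm Sig ar Vr
  | app : (f : Sig) → (Fin (ar f) → HTerm Sig ar Vr) → HTerm Sig ar Vr

namespace HTerm

variable {Sig : Type} {ar : Sig → ℕ} {Vr : Type}

/-- The set of variables occurring in a term. -/
def vars : HTerm Sig ar Vr → Set Vr
  | var x => {x}
  | app _ ts => ⋃ i, (ts i).vars

/-- The number of occurrences of the variable `z` in a term. -/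
def count (z : Vr) : HTerm Sig ar Vr → ℕ
  | var x => if x = z then 1 else 0
  | app _ ts => ∑ i, (ts i).count z

/-- Application of a (raw) substitution to a term. -/
def substApp (σ : Vr → HTerm Sig ar Vr) : HTerm Sig ar Vr → HTerm Sig ar Vr
  | var x => σ x
  | app f ts => app f (fun i => (ts i).substApp σ)

end HTerm

/-- The `cyclic` operator, strengthening `sh` by coupling `x` with `t`. -/
def cyclicSH {Sig : Type} {ar : Sig → ℕ} {Vr : Type} (x : Vr) (t : HTerm Sig ar Vr)
    (sh : Set (Set Vr)) : Set (Set Vr) :=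
  nrelSH ({x} ∪ t.vars) sh ∪ relSH (t.vars \ {x}) sh

section Predicates

variable {Sig : Type} {ar : Sig → ℕ} {Vr : Type}

/-- `t` is ground in `d`. -/
def groundD (VI : Set Vr) (d : SFLElem Vr) (t : HTerm Sig ar Vr) : Prop :=
  t.vars ⊆ VI \ ⋃₀ d.sh

/-- `s` and `t` are independent in `d`. -/
def indD (d : SFLElem Vr) (s t : HTerm Sig ar Vr) : Prop :=
  relSH s.vars d.sh ∩ relSH t.vars d.sh = ∅

/-- `t` is free in `d` (it is a variable belonging to the freeness component). -/
def freeD (d : SFLElem Vr) (t : HTerm Sig ar Vr) : Prop :=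
  ∃ y ∈ d.f, t = HTerm.var y

/-- `y` occurs linearly in `t` in `d`. -/
def occlinD (VI : Set Vr) (d : SFLElem Vr) (y : Vr) (t : HTerm Sig ar Vr) : Prop :=
  groundD VI d (HTerm.var y : HTerm Sig ar Vr) ∨
    (t.count y = 1 ∧ y ∈ d.l ∧
      ∀ z ∈ t.vars, y ≠ z → indD d (HTerm.var y : HTerm Sig ar Vr) (HTerm.var z))

/-- `t` is linear in `d`. -/
def linD (VI : Set Vr) (d : SFLElem Vr) (t : HTerm Sig ar Vr) : Prop :=
  ∀ y ∈ t.vars, occlinD VI d y t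

/-- The set of variables of interest that may share with `t` in `d`. -/
def shareWith (d : SFLElem Vr) (t : HTerm Sig ar Vr) : Set Vr :=
  ⋃₀ relSH t.vars d.sh

end Predicates

section Amgu

variable {Sig : Type} {ar : Sig → ℕ} {Vr : Type}

/-- The core of the abstract mgu operator (the non-bottom case of `amgu_S`). -/
def amguCore (VI : Set Vr) (d : SFLElem Vr) (x : Vr) (t : HTerm Sig ar Vr) :
    SFLElem Vr :=
  let sh := d.sh
  let shx := relSH {x} sh
  let sht := relSH t.vars sh
  let shxt := shx ∩ sht
  let shm := nrelSH ({x} ∪ t.vars) sh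
  let sh'' : Set (Set Vr) :=
    if freeD d (HTerm.var x : HTerm Sig ar Vr) ∨ freeD d t then
      binSH shx sht
    else if linD VI d (HTerm.var x : HTerm Sig ar Vr) ∧ linD VI d t then
      binSH (shx ∪ binSH shx (starSH VI shxt)) (sht ∪ binSH sht (starSH VI shxt))
    else if linD VI d (HTerm.var x : HTerm Sig ar Vr) then
      binSH (starSH VI shx) sht
    else if linD VI d t then
      binSH shx (starSH VI sht)
    else
      binSH (starSH VI shx) (starSH VI sht)
  let sh' := cyclicSH x t (shm ∪ sh'')
  let Sx := shareWith d (HTerm.var x : HTerm Sig ar Vr)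
  let St := shareWith d t
  let f' : Set Vr :=
    if freeD d (HTerm.var x : HTerm Sig ar Vr) ∧ freeD d t then d.f
    else if freeD d (HTerm.var x : HTerm Sig ar Vr) then d.f \ Sx
    else if freeD d t then d.f \ St
    else d.f \ (Sx ∪ St)
  let l'' : Set Vr :=
    if linD VI d (HTerm.var x : HTerm Sig ar Vr) ∧ linD VI d t then d.l \ (Sx ∩ St)
    else if linD VI d (HTerm.var x : HTerm Sig ar Vr) then d.l \ Sx
    else if linD VI d t then d.l \ St
    else d.l \ (Sx ∪ St)
  let l' := (VI \ ⋃₀ sh') ∪ f' ∪ l''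
  ⟨sh', f', l'⟩

/-- The abstract mgu operator `amgu_S`, relative to the rational-tree equality
theory (no occurs-check bottom case). -/
def amguRT (VI : Set Vr) (d : SFLElem Vr) (x : Vr) (t : HTerm Sig ar Vr) :
    SFLElem Vr :=
  if d = botS VI then botS VI else amguCore VI d x t

/-- The abstract unification operator `aunify_S` (rational-tree case),
applying `amgu_S` along a sequence of bindings. -/
def aunifyRT (VI : Set Vr) (d : SFLElem Vr) :
    List (Vr × HTerm Sig ar Vr) → SFLElem Vr
  | [] => d
  | b :: bs => aunifyRT VI (amguRT VI d b.1 b.2) bs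

end Amgu

section Observables

variable {Vr : Type}

/-- The groundness observable `ρ_Con` on `SFL`. -/
def rhoCon (VI : Set Vr) (d : SFLElem Vr) : SFLElem Vr :=
  ⟨{S | S ∈ SG VI ∧ S ⊆ ⋃₀ d.sh}, ∅, ∅⟩

/-- The independence observable `ρ_PS` on `SFL`. -/
def rhoPS (VI : Set Vr) (d : SFLElem Vr) : SFLElem Vr :=
  ⟨{S | S ∈ SG VI ∧ ∀ P : Set Vr, P ⊆ S → P.ncard = 2 → ∃ U ∈ d.sh, P ⊆ U}, ∅, ∅⟩

/-- The freeness observable `ρ_F` on `SFL`. -/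
def rhoF (VI : Set Vr) (d : SFLElem Vr) : SFLElem Vr := ⟨SG VI, d.f, ∅⟩

/-- The linearity observable `ρ_L` on `SFL`. -/
def rhoL (VI : Set Vr) (d : SFLElem Vr) : SFLElem Vr := ⟨SG VI, ∅, d.l⟩

end Observables

namespace RhoPSDMinimality

def ObservablyDistinct (Sig : Type) (ar : Sig → ℕ) {Vr : Type} (VI : Set Vr)
    (d₁ d₂ : SFLElem Vr) : Prop :=
  ∃ bs : List (Vr × HTerm Sig ar Vr),
    (∀ b ∈ bs, insert b.1 b.2.vars ⊆ VI ∧ b.2 ≠ HTerm.var b.1) ∧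
    ∃ ρ ∈ ({rhoCon VI, rhoPS VI, rhoF VI, rhoL VI} : Set (SFLElem Vr → SFLElem Vr)),
      ρ (aunifyRT VI d₁ bs) ≠ ρ (aunifyRT VI d₂ bs)

variable {Sig : Type} {ar : Sig → ℕ} {Vr : Type}

lemma ObservablyDistinct.symm {VI : Set Vr} {d₁ d₂ : SFLElem Vr}
    (h : ObservablyDistinct Sig ar VI d₁ d₂) : ObservablyDistinct Sig ar VI d₂ d₁ :=
  let ⟨bs, hbs, ρ, hρ, hne⟩ := h
  ⟨bs, hbs, ρ, hρ, hne.symm⟩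

lemma observablyDistinct_of_f_ne {VI : Set Vr} {d₁ d₂ : SFLElem Vr} (hf : d₁.f ≠ d₂.f) :
    ObservablyDistinct Sig ar VI d₁ d₂ :=
  ⟨[], by simp, rhoF VI, by simp, fun h => hf (congrArg SFLElem.f h :)⟩

lemma observablyDistinct_of_l_ne {VI : Set Vr} {d₁ d₂ : SFLElem Vr} (hl : d₁.l ≠ d₂.l) :
    ObservablyDistinct Sig ar VI d₁ d₂ :=
  ⟨[], by simp, rhoL VI, by simp, fun h => hl (congrArg SFLElem.l h :)⟩

def constTerm (a : Sig) (ha : ar a = 0) : HTerm Sig ar Vr :=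
  HTerm.app a fun i => absurd i.isLt (by omega)

@[simp]
lemma vars_constTerm (a : Sig) (ha : ar a = 0) : (constTerm (Vr := Vr) a ha).vars = ∅ := by
  have : IsEmpty (Fin (ar a)) := by rw [ha]; infer_instance
  simp [constTerm, HTerm.vars]

lemma amguRT_constTerm_sh (VI : Set Vr) (d : SFLElem Vr) (z : Vr) (a : Sig) (ha : ar a = 0) :
    (amguRT VI d z (constTerm a ha)).sh = {U ∈ d.sh | z ∉ U} := by
  by_cases hd : d = botS VI
  · simp [amguRT, hd, botS]
  · ext U
    simp [amguRT, hd, amguCore, cyclicSH, nrelSH, relSH, binSH, starSH]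

lemma exists_ground_bindings (VI : Set Vr) (a : Sig) (ha : ar a = 0) {D : Set Vr}
    (hD : D.Finite) :
    ∃ bs : List (Vr × HTerm Sig ar Vr),
      (∀ b ∈ bs, insert b.1 b.2.vars ⊆ D ∧ b.2 ≠ HTerm.var b.1) ∧
      ∀ d : SFLElem Vr, (aunifyRT VI d bs).sh = {U ∈ d.sh | Disjoint U D} := by
  induction D, hD using Set.Finite.induction_on with
  | empty => exact ⟨[], by simp, fun d => by simp [aunifyRT]⟩
  | @insert z D _ _ ih =>
    obtain ⟨bs, hbs, hsh⟩ := ih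
    refine ⟨(z, constTerm a ha) :: bs, ?_, fun d => ?_⟩
    · simp only [List.mem_cons, forall_eq_or_imp, vars_constTerm]
      refine ⟨⟨by simp, by simp [constTerm]⟩, fun b hb => ?_⟩
      exact ⟨(hbs b hb).1.trans (Set.subset_insert z D), (hbs b hb).2⟩
    · ext U
      simp [aunifyRT, hsh, amguRT_constTerm_sh, Set.disjoint_insert_right, and_assoc]

def CoveredWithin (sh : Set (Set Vr)) (S P : Set Vr) : Prop :=
  ∃ U ∈ sh, P ⊆ U ∧ U ⊆ S

lemma exists_witness_of_mem_rhoPSDsh_of_not_mem {VI S : Set Vr} {sh₁ sh₂ : Set (Set Vr)}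
    (h₁ : S ∈ rhoPSDsh VI sh₁) (h₂ : S ∉ rhoPSDsh VI sh₂) :
    ∃ P ⊆ S, ((∃ z, P = {z}) ∨ P.ncard = 2) ∧
      CoveredWithin sh₁ S P ∧ ¬ CoveredWithin sh₂ S P := by
  obtain ⟨hSG, hcover₁⟩ := h₁
  have cover₁ : ∀ y ∈ S, ∀ z ∈ S, CoveredWithin sh₁ S {y, z} := by
    intro y hy z hz
    obtain ⟨U, ⟨hU, hyU, hUS⟩, hzU⟩ : z ∈ ⋃₀ {U | U ∈ sh₁ ∧ y ∈ U ∧ U ⊆ S} :=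
      hcover₁ y hy ▸ hz
    exact ⟨U, hU, Set.insert_subset hyU (Set.singleton_subset_iff.2 hzU), hUS⟩
  obtain ⟨y, hy, hne⟩ : ∃ y ∈ S, S ≠ ⋃₀ {U | U ∈ sh₂ ∧ y ∈ U ∧ U ⊆ S} := by
    by_contra! h
    exact h₂ ⟨hSG, h⟩
  obtain ⟨z, hz, hzy⟩ : ∃ z ∈ S, z ∉ ⋃₀ {U | U ∈ sh₂ ∧ y ∈ U ∧ U ⊆ S} :=
    Set.exists_of_ssubset ((Set.sUnion_subset fun U hU => hU.2.2).ssubset_of_ne hne.symm)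
  have not_cover₂ : ¬ CoveredWithin sh₂ S {y, z} := fun ⟨U, hU, hyzU, hUS⟩ =>
    hzy ⟨U, ⟨hU, hyzU (.inl rfl), hUS⟩, hyzU (.inr rfl)⟩
  by_cases hz₂ : CoveredWithin sh₂ S {z}
  · have hyz : y ≠ z := by
      rintro rfl
      exact not_cover₂ (by simpa using hz₂)
    refine ⟨{y, z}, Set.insert_subset hy (Set.singleton_subset_iff.2 hz),
      .inr (Set.ncard_pair hyz), cover₁ y hy z hz, not_cover₂⟩
  · exact ⟨{z}, Set.singleton_subset_iff.2 hz, .inl ⟨z, rfl⟩,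
      by simpa using cover₁ z hz z hz, hz₂⟩

lemma exists_observable_mem_sh_iff {VI P : Set Vr} (hP : P ⊆ VI)
    (hcard : (∃ z, P = {z}) ∨ P.ncard = 2) :
    ∃ ρ ∈ ({rhoCon VI, rhoPS VI, rhoF VI, rhoL VI} : Set (SFLElem Vr → SFLElem Vr)),
      ∀ d : SFLElem Vr, P ∈ (ρ d).sh ↔ ∃ U ∈ d.sh, P ⊆ U := by
  rcases hcard with ⟨z, rfl⟩ | hcard
  · refine ⟨rhoCon VI, by simp, fun d => ?_⟩
    simp [rhoCon, SG, Set.singleton_subset_iff.1 hP]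
  · have hPne : P ≠ ∅ := (Set.nonempty_of_ncard_ne_zero (by omega)).ne_empty
    refine ⟨rhoPS VI, by simp, fun d => ⟨fun h => h.2 P le_rfl hcard, ?_⟩⟩
    rintro ⟨U, hU, hPU⟩
    exact ⟨⟨hP, hPne⟩, fun Q hQP _ => ⟨U, hU, hQP.trans hPU⟩⟩

lemma observablyDistinct_of_mem_rhoPSDsh_of_not_mem (a : Sig) (ha : ar a = 0) {VI S : Set Vr}
    (hVI : VI.Finite) {d₁ d₂ : SFLElem Vr} (h₂ : d₂.WF VI)
    (hS₁ : S ∈ rhoPSDsh VI d₁.sh) (hS₂ : S ∉ rhoPSDsh VI d₂.sh) :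
    ObservablyDistinct Sig ar VI d₁ d₂ := by
  have hSVI : S ⊆ VI := hS₁.1.1
  obtain ⟨P, hPS, hcard, ⟨U₁, hU₁, hPU₁, hU₁S⟩, not_cover₂⟩ :=
    exists_witness_of_mem_rhoPSDsh_of_not_mem hS₁ hS₂
  obtain ⟨ρ, hρ, hmem⟩ := exists_observable_mem_sh_iff (hPS.trans hSVI) hcard
  obtain ⟨bs, hbs, hground⟩ :=
    exists_ground_bindings (Sig := Sig) (D := VI \ S) VI a ha hVI.sdiff
  refine ⟨bs, fun b hb => ⟨(hbs b hb).1.trans Set.sdiff_subset, (hbs b hb).2⟩, ρ, hρ,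
    fun h => not_cover₂ ?_⟩
  have hP₁ : P ∈ (ρ (aunifyRT VI d₁ bs)).sh := by
    rw [hmem, hground]
    exact ⟨U₁, ⟨hU₁, Set.disjoint_sdiff_right.mono_left hU₁S⟩, hPU₁⟩
  rw [h, hmem, hground] at hP₁
  obtain ⟨U, ⟨hU, hUdisj⟩, hPU⟩ := hP₁
  exact ⟨U, hU, hPU, (disjoint_sdiff_iff_le (h₂.1 hU).1 hSVI).1 hUdisj⟩

end RhoPSDMinimality

open RhoPSDMinimality in
/-- Minimality: if `ρ_PSD(d1) ≠ ρ_PSD(d2)` then some sequence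
of bindings and some observable among `ρ_Con`, `ρ_PS`, `ρ_F`, `ρ_L`
distinguishes `d1` from `d2` after abstract unification. -/
theorem rhoPSD_minimality
    {Sig Vr : Type} {ar : Sig → ℕ}
    (_hSig : ∃ a b : Sig, a ≠ b ∧ ar a = 0)
    (VI : Set Vr) (_hVI : VI.Finite)
    (d1 d2 : SFLElem Vr) (_h1 : d1.WF VI) (_h2 : d2.WF VI)
    (_hne : rhoPSD VI d1 ≠ rhoPSD VI d2) :
    ∃ bs : List (Vr × HTerm Sig ar Vr),
      (∀ b ∈ bs, insert b.1 b.2.vars ⊆ VI ∧ b.2 ≠ HTerm.var b.1) ∧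
      ∃ ρ ∈ ({rhoCon VI, rhoPS VI, rhoF VI, rhoL VI} :
          Set (SFLElem Vr → SFLElem Vr)),
        ρ (aunifyRT VI d1 bs) ≠ ρ (aunifyRT VI d2 bs) := by
  obtain ⟨a, -, -, ha⟩ := _hSig
  rcases ne_or_eq d1.f d2.f with hf | hf
  · exact observablyDistinct_of_f_ne hf
  rcases ne_or_eq d1.l d2.l with hl | hl
  · exact observablyDistinct_of_l_ne hl
  have hsh : rhoPSDsh VI d1.sh ≠ rhoPSDsh VI d2.sh := fun h =>
    _hne (by simp only [rhoPSD, h, hf, hl])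
  obtain ⟨S, ⟨hS₁, hS₂⟩ | ⟨hS₂, hS₁⟩⟩ := Set.symmDiff_nonempty.2 hsh
  · exact observablyDistinct_of_mem_rhoPSDsh_of_not_mem a ha _hVI _h2 hS₁ hS₂
  · exact (observablyDistinct_of_mem_rhoPSDsh_of_not_mem a ha _hVI _h1 hS₂ hS₁).symm
end
end

section
/- Let sh ∈ SH and (x ↦ t) be a binding with {x} ∪ vars(t) ⊆ VI. Put sh_- = rel̄({x} ∪ vars(t), sh), sh_x = rel({x}, sh), sh_t = rel(vars(t), sh), sh_xt = sh_x ∩ sh_t, sh_W = rel(vars(t) \ {x}, sh), and sh⋄ = bin(sh_x ∪ bin(sh_x, sh_xt*), sh_t ∪ bin(sh_t, sh_xt*)). Then ρ_PSD(cyclic_x^t(sh_- ∪ sh⋄)) = ρ_PSD(sh_- ∪ bin(sh_x, sh_t)) if x ∉ vars(t), and ρ_PSD(cyclic_x^t(sh_- ∪ sh⋄)) = ρ_PSD(sh_- ∪ bin(sh_x², sh_W)) if x ∈ vars(t). (Thus, modulo the redundancy-removing closure ρ_PSD, the inner binary unions in the linear–linear case of abstract unification can be avoided.) -/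
open Classical

noncomputable section

/-- If every pair of points inside a group of `sh1` is covered by a smaller
group of `sh2`, then `ρ_PSD sh1 ⊆ ρ_PSD sh2`. -/
lemma rho_cover_subset {Vr : Type} (VI : Set Vr) (sh1 sh2 : Set (Set Vr))
    (h : ∀ U ∈ sh1, ∀ y ∈ U, ∀ z ∈ U, ∃ U' ∈ sh2, y ∈ U' ∧ z ∈ U' ∧ U' ⊆ U) :
    rhoPSDsh VI sh1 ⊆ rhoPSDsh VI sh2 := by
  intro S hS
  obtain ⟨hSG, hcov⟩ := hS
  refine ⟨hSG, fun y hy => ?_⟩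
  apply Set.Subset.antisymm
  · intro z hz
    have hz' : z ∈ ⋃₀ {U | U ∈ sh1 ∧ y ∈ U ∧ U ⊆ S} := (hcov y hy) ▸ hz
    obtain ⟨U, ⟨hU1, hyU, hUS⟩, hzU⟩ := hz'
    obtain ⟨U', hU'2, hyU', hzU', hU'U⟩ := h U hU1 y hyU z hzU
    exact ⟨U', ⟨hU'2, hyU', hU'U.trans hUS⟩, hzU'⟩
  · intro z hz
    obtain ⟨U, ⟨_, _, hUS⟩, hzU⟩ := hz
    exact hUS hzU

/-- Decomposition of the elements of `sh⋄`. -/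
lemma shd_decomp {Vr : Type} (VI : Set Vr) (shx sht shxt : Set (Set Vr)) (U : Set Vr)
    (hU : U ∈ binSH (shx ∪ binSH shx (starSH VI shxt))
                    (sht ∪ binSH sht (starSH VI shxt))) :
    ∃ Sx, Sx ∈ shx ∧ ∃ St, St ∈ sht ∧ ∃ C, C ⊆ shxt ∧ U = Sx ∪ St ∪ ⋃₀ C := by
  obtain ⟨S1, hS1, S2, hS2, rfl⟩ := hU
  have h1 : ∃ Sx, Sx ∈ shx ∧ ∃ C1, C1 ⊆ shxt ∧ S1 = Sx ∪ ⋃₀ C1 := by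
    rcases hS1 with h | ⟨Sx, hSx, T, ⟨-, F, -, -, hF, rfl⟩, rfl⟩
    · exact ⟨S1, h, ∅, by simp⟩
    · exact ⟨Sx, hSx, F, hF, rfl⟩
  have h2 : ∃ St, St ∈ sht ∧ ∃ C2, C2 ⊆ shxt ∧ S2 = St ∪ ⋃₀ C2 := by
    rcases hS2 with h | ⟨St, hSt, T, ⟨-, F, -, -, hF, rfl⟩, rfl⟩
    · exact ⟨S2, h, ∅, by simp⟩
    · exact ⟨St, hSt, F, hF, rfl⟩
  obtain ⟨Sx, hSx, C1, hC1, rfl⟩ := h1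
  obtain ⟨St, hSt, C2, hC2, rfl⟩ := h2
  refine ⟨Sx, hSx, St, hSt, C1 ∪ C2, Set.union_subset hC1 hC2, ?_⟩
  rw [Set.sUnion_union]
  ext w
  simp only [Set.mem_union]
  tauto

/-- Modulo `ρ_PSD`, the inner binary unions in the
linear–linear case of abstract unification can be avoided. -/
theorem rhoPSD_inner_bin_unions_useless
    {Sig Vr : Type} {ar : Sig → ℕ}
    (VI : Set Vr) (_hVI : VI.Finite)
    (sh : Set (Set Vr)) (_hsh : sh ⊆ SG VI)
    (x : Vr) (t : HTerm Sig ar Vr)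
    (_hxt : insert x t.vars ⊆ VI) (_hb : t ≠ HTerm.var x) :
    let shx := relSH {x} sh
    let sht := relSH t.vars sh
    let shxt := shx ∩ sht
    let shm := nrelSH ({x} ∪ t.vars) sh
    let shW := relSH (t.vars \ {x}) sh
    let shd := binSH (shx ∪ binSH shx (starSH VI shxt))
                     (sht ∪ binSH sht (starSH VI shxt))
    (x ∉ t.vars →
      rhoPSDsh VI (cyclicSH x t (shm ∪ shd)) =
        rhoPSDsh VI (shm ∪ binSH shx sht)) ∧
    (x ∈ t.vars →
      rhoPSDsh VI (cyclicSH x t (shm ∪ shd)) =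
        rhoPSDsh VI (shm ∪ binSH (binSH shx shx) shW)) := by
  intro shx sht shxt shm shW shd
  -- basic membership facts
  have hxm : ∀ P, P ∈ shx → x ∈ P := by
    intro P hP
    have hP' : P ∈ sh ∧ P ∩ {x} ≠ ∅ := hP
    obtain ⟨w, hw1, hw2⟩ := Set.nonempty_iff_ne_empty.mpr hP'.2
    rwa [Set.mem_singleton_iff.mp hw2] at hw1
  have hshm : ∀ U, U ∈ shm → U ∈ sh ∧ U ∩ ({x} ∪ t.vars) = ∅ := by
    intro U hU
    have hU' : U ∈ sh ∧ U ∉ relSH ({x} ∪ t.vars) sh := hU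
    refine ⟨hU'.1, ?_⟩
    by_contra hne
    exact hU'.2 ⟨hU'.1, hne⟩
  have hshmA : shm ⊆ cyclicSH x t (shm ∪ shd) := by
    intro U hU
    refine Or.inl ⟨Or.inl hU, ?_⟩
    intro hrel
    have hrel' : U ∈ (shm ∪ shd) ∧ U ∩ ({x} ∪ t.vars) ≠ ∅ := hrel
    exact hrel'.2 (hshm U hU).2
  have hAsub : cyclicSH x t (shm ∪ shd) ⊆ shm ∪ shd := by
    intro U hU
    rcases hU with hU | hU
    · exact hU.1
    · exact hU.1
  have hdec : ∀ U, U ∈ shd →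
      ∃ Sx, Sx ∈ shx ∧ ∃ St, St ∈ sht ∧ ∃ C, C ⊆ shxt ∧ U = Sx ∪ St ∪ ⋃₀ C := by
    intro U hU
    exact shd_decomp VI shx sht shxt U hU
  constructor
  · -- case x ∉ vars t
    intro hx
    have hBA : shm ∪ binSH shx sht ⊆ cyclicSH x t (shm ∪ shd) := by
      intro U hU
      rcases hU with hU | hU
      · exact hshmA hU
      · obtain ⟨P, hP, Q, hQ, rfl⟩ := hU
        have hQ' : Q ∈ sh ∧ Q ∩ t.vars ≠ ∅ := hQ
        obtain ⟨w, hwQ, hwt⟩ := Set.nonempty_iff_ne_empty.mpr hQ'.2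
        have hUshd : P ∪ Q ∈ shd := ⟨P, Or.inl hP, Q, Or.inl hQ, rfl⟩
        refine Or.inr ⟨Or.inr hUshd, Set.nonempty_iff_ne_empty.mp
          ⟨w, Set.mem_union_right _ hwQ, hwt, ?_⟩⟩
        intro hwx
        exact hx (Set.mem_singleton_iff.mp hwx ▸ hwt)
    have h21 : ∀ U ∈ shm ∪ binSH shx sht, ∀ y ∈ U, ∀ z ∈ U,
        ∃ U' ∈ cyclicSH x t (shm ∪ shd), y ∈ U' ∧ z ∈ U' ∧ U' ⊆ U :=
      fun U hU y hy z hz => ⟨U, hBA hU, hy, hz, subset_rfl⟩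
    have h12 : ∀ U ∈ cyclicSH x t (shm ∪ shd), ∀ y ∈ U, ∀ z ∈ U,
        ∃ U' ∈ shm ∪ binSH shx sht, y ∈ U' ∧ z ∈ U' ∧ U' ⊆ U := by
      intro U hU y hy z hz
      rcases hAsub hU with hUm | hUd
      · exact ⟨U, Or.inl hUm, hy, hz, subset_rfl⟩
      obtain ⟨Sx, hSx, St, hSt, C, hC, hUeq⟩ := hdec U hUd
      have hSxU : Sx ⊆ U := by
        rw [hUeq]; exact Set.subset_union_left.trans Set.subset_union_left
      have hStU : St ⊆ U := by
        rw [hUeq]; exact Set.subset_union_right.trans Set.subset_union_left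
      have hCU : ∀ G ∈ C, G ⊆ U := by
        intro G hG
        rw [hUeq]
        exact (Set.subset_sUnion_of_mem hG).trans Set.subset_union_right
      have hmemU : ∀ w ∈ U, w ∈ Sx ∨ w ∈ St ∨ ∃ G ∈ C, w ∈ G := by
        intro w hw
        rw [hUeq] at hw
        rcases hw with (hw | hw) | hw
        · exact Or.inl hw
        · exact Or.inr (Or.inl hw)
        · obtain ⟨G, hG, hwG⟩ := hw
          exact Or.inr (Or.inr ⟨G, hG, hwG⟩)
      have cover : ∀ v ∈ U,
          (∃ G, (G ∈ shx ∧ G ∈ sht) ∧ v ∈ G ∧ G ⊆ U) ∨ v ∈ Sx ∨ v ∈ St := by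
        intro v hv
        rcases hmemU v hv with h | h | ⟨G, hG, hvG⟩
        · exact Or.inr (Or.inl h)
        · exact Or.inr (Or.inr h)
        · have hG' : G ∈ shx ∧ G ∈ sht := hC hG
          exact Or.inl ⟨G, hG', hvG, hCU G hG⟩
      have mk : ∀ P, P ∈ shx → ∀ Q, Q ∈ sht → P ⊆ U → Q ⊆ U → y ∈ P ∪ Q → z ∈ P ∪ Q →
          ∃ U' ∈ shm ∪ binSH shx sht, y ∈ U' ∧ z ∈ U' ∧ U' ⊆ U :=
        fun P hP Q hQ hPU hQU hy' hz' =>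
          ⟨P ∪ Q, Or.inr ⟨P, hP, Q, hQ, rfl⟩, hy', hz', Set.union_subset hPU hQU⟩
      rcases cover y hy with ⟨Gy, ⟨hGyx, hGyt⟩, hyG, hGyU⟩ | hySx | hySt <;>
        rcases cover z hz with ⟨Gz, ⟨hGzx, hGzt⟩, hzG, hGzU⟩ | hzSx | hzSt
      · exact mk Gy hGyx Gz hGzt hGyU hGzU (Set.mem_union_left _ hyG)
          (Set.mem_union_right _ hzG)
      · exact mk Sx hSx Gy hGyt hSxU hGyU (Set.mem_union_right _ hyG)
          (Set.mem_union_left _ hzSx)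
      · exact mk Gy hGyx St hSt hGyU hStU (Set.mem_union_left _ hyG)
          (Set.mem_union_right _ hzSt)
      · exact mk Sx hSx Gz hGzt hSxU hGzU (Set.mem_union_left _ hySx)
          (Set.mem_union_right _ hzG)
      · exact mk Sx hSx St hSt hSxU hStU (Set.mem_union_left _ hySx)
          (Set.mem_union_left _ hzSx)
      · exact mk Sx hSx St hSt hSxU hStU (Set.mem_union_left _ hySx)
          (Set.mem_union_right _ hzSt)
      · exact mk Gz hGzx St hSt hGzU hStU (Set.mem_union_right _ hySt)
          (Set.mem_union_left _ hzG)
      · exact mk Sx hSx St hSt hSxU hStU (Set.mem_union_right _ hySt)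
          (Set.mem_union_left _ hzSx)
      · exact mk Sx hSx St hSt hSxU hStU (Set.mem_union_right _ hySt)
          (Set.mem_union_right _ hzSt)
    exact Set.Subset.antisymm (rho_cover_subset VI _ _ h12) (rho_cover_subset VI _ _ h21)
  · -- case x ∈ vars t
    intro hx
    have hshxt : ∀ P, P ∈ shx → P ∈ sht := by
      intro P hP
      have hP' : P ∈ sh ∧ P ∩ {x} ≠ ∅ := hP
      exact ⟨hP'.1, Set.nonempty_iff_ne_empty.mp ⟨x, hxm P hP, hx⟩⟩
    have hBA : shm ∪ binSH (binSH shx shx) shW ⊆ cyclicSH x t (shm ∪ shd) := by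
      intro U hU
      rcases hU with hU | hU
      · exact hshmA hU
      obtain ⟨PQ, hPQ, W, hW, rfl⟩ := hU
      obtain ⟨P, hP, Q, hQ, rfl⟩ := hPQ
      have hQ' : Q ∈ sh ∧ Q ∩ {x} ≠ ∅ := hQ
      have hW' : W ∈ sh ∧ W ∩ (t.vars \ {x}) ≠ ∅ := hW
      have hQstar : Q ∈ starSH VI shxt := by
        refine ⟨_hsh hQ'.1, {Q}, Set.finite_singleton Q, Set.singleton_nonempty Q, ?_, ?_⟩
        · rw [Set.singleton_subset_iff]
          exact ⟨hQ, hshxt Q hQ⟩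
        · exact (Set.sUnion_singleton Q).symm
      have hWt : W ∈ sht := by
        obtain ⟨w, hwW, hwd⟩ := Set.nonempty_iff_ne_empty.mpr hW'.2
        exact ⟨hW'.1, Set.nonempty_iff_ne_empty.mp ⟨w, hwW, hwd.1⟩⟩
      have hUshd : P ∪ Q ∪ W ∈ shd :=
        ⟨P ∪ Q, Or.inr ⟨P, hP, Q, hQstar, rfl⟩, W, Or.inl hWt, rfl⟩
      obtain ⟨w, hwW, hwd⟩ := Set.nonempty_iff_ne_empty.mpr hW'.2
      exact Or.inr ⟨Or.inr hUshd,
        Set.nonempty_iff_ne_empty.mp ⟨w, Set.mem_union_right _ hwW, hwd⟩⟩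
    have h21 : ∀ U ∈ shm ∪ binSH (binSH shx shx) shW, ∀ y ∈ U, ∀ z ∈ U,
        ∃ U' ∈ cyclicSH x t (shm ∪ shd), y ∈ U' ∧ z ∈ U' ∧ U' ⊆ U :=
      fun U hU y hy z hz => ⟨U, hBA hU, hy, hz, subset_rfl⟩
    have h12 : ∀ U ∈ cyclicSH x t (shm ∪ shd), ∀ y ∈ U, ∀ z ∈ U,
        ∃ U' ∈ shm ∪ binSH (binSH shx shx) shW, y ∈ U' ∧ z ∈ U' ∧ U' ⊆ U := by
      intro U hU y hy z hz
      -- split on the two parts of `cyclic`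
      rcases hU with hU | hU
      · -- irrelevant part: `U` must come from `shm`
        obtain ⟨hUmem, hUnot⟩ := hU
        rcases hUmem with hUm | hUd
        · exact ⟨U, Or.inl hUm, hy, hz, subset_rfl⟩
        · exfalso
          obtain ⟨Sx, hSx, St, hSt, C, hC, hUeq⟩ := hdec U hUd
          have hxU : x ∈ U := by
            rw [hUeq]
            exact Set.mem_union_left _ (Set.mem_union_left _ (hxm Sx hSx))
          exact hUnot ⟨Or.inr hUd, Set.nonempty_iff_ne_empty.mp
            ⟨x, hxU, Set.mem_union_left _ rfl⟩⟩
      obtain ⟨hUmem, hmeet⟩ := hU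
      rcases hUmem with hUm | hUd
      · exact ⟨U, Or.inl hUm, hy, hz, subset_rfl⟩
      obtain ⟨Sx, hSx, St, hSt, C, hC, hUeq⟩ := hdec U hUd
      have hSx' : Sx ∈ sh ∧ Sx ∩ {x} ≠ ∅ := hSx
      have hSt' : St ∈ sh ∧ St ∩ t.vars ≠ ∅ := hSt
      have hSxU : Sx ⊆ U := by
        rw [hUeq]; exact Set.subset_union_left.trans Set.subset_union_left
      have hStU : St ⊆ U := by
        rw [hUeq]; exact Set.subset_union_right.trans Set.subset_union_left
      have hCU : ∀ G ∈ C, G ⊆ U := by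
        intro G hG
        rw [hUeq]
        exact (Set.subset_sUnion_of_mem hG).trans Set.subset_union_right
      have hmemU : ∀ w ∈ U, w ∈ Sx ∨ w ∈ St ∨ ∃ G ∈ C, w ∈ G := by
        intro w hw
        rw [hUeq] at hw
        rcases hw with (hw | hw) | hw
        · exact Or.inl hw
        · exact Or.inr (Or.inl hw)
        · obtain ⟨G, hG, hwG⟩ := hw
          exact Or.inr (Or.inr ⟨G, hG, hwG⟩)
      -- a constituent of U lying in shW
      have hW0 : ∃ W0, W0 ∈ shW ∧ W0 ⊆ U := by
        obtain ⟨w0, hw0U, hw0d⟩ := Set.nonempty_iff_ne_empty.mpr hmeet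
        rcases hmemU w0 hw0U with h | h | ⟨G, hG, hwG⟩
        · exact ⟨Sx, ⟨hSx'.1, Set.nonempty_iff_ne_empty.mp ⟨w0, h, hw0d⟩⟩, hSxU⟩
        · exact ⟨St, ⟨hSt'.1, Set.nonempty_iff_ne_empty.mp ⟨w0, h, hw0d⟩⟩, hStU⟩
        · have hG' : G ∈ shx ∧ G ∈ sht := hC hG
          have hGsh : G ∈ sh ∧ G ∩ {x} ≠ ∅ := hG'.1
          exact ⟨G, ⟨hGsh.1, Set.nonempty_iff_ne_empty.mp ⟨w0, hwG, hw0d⟩⟩, hCU G hG⟩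
      obtain ⟨W0, hW0W, hW0U⟩ := hW0
      have cover : ∀ v ∈ U, (∃ G, G ∈ shx ∧ v ∈ G ∧ G ⊆ U) ∨ v ∈ St := by
        intro v hv
        rcases hmemU v hv with h | h | ⟨G, hG, hvG⟩
        · exact Or.inl ⟨Sx, hSx, h, hSxU⟩
        · exact Or.inr h
        · have hG' : G ∈ shx ∧ G ∈ sht := hC hG
          exact Or.inl ⟨G, hG'.1, hvG, hCU G hG⟩
      have mk : ∀ P, P ∈ shx → ∀ Q, Q ∈ shx → ∀ W, W ∈ shW →
          P ⊆ U → Q ⊆ U → W ⊆ U → y ∈ P ∪ Q ∪ W → z ∈ P ∪ Q ∪ W →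
          ∃ U' ∈ shm ∪ binSH (binSH shx shx) shW, y ∈ U' ∧ z ∈ U' ∧ U' ⊆ U :=
        fun P hP Q hQ W hW hPU hQU hWU hy' hz' =>
          ⟨P ∪ Q ∪ W, Or.inr ⟨P ∪ Q, ⟨P, hP, Q, hQ, rfl⟩, W, hW, rfl⟩, hy', hz',
            Set.union_subset (Set.union_subset hPU hQU) hWU⟩
      -- Is St in shx, or in shW?
      obtain ⟨w, hwSt, hwt⟩ := Set.nonempty_iff_ne_empty.mpr hSt'.2
      by_cases hwx : w = x
      · -- St ∈ shx : every point of U is in an shx-constituent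
        have hStx : St ∈ shx := ⟨hSt'.1, Set.nonempty_iff_ne_empty.mp
          ⟨x, hwx ▸ hwSt, rfl⟩⟩
        have cover' : ∀ v ∈ U, ∃ G, G ∈ shx ∧ v ∈ G ∧ G ⊆ U := by
          intro v hv
          rcases cover v hv with h | h
          · exact h
          · exact ⟨St, hStx, h, hStU⟩
        obtain ⟨Gy, hGy, hyG, hGyU⟩ := cover' y hy
        obtain ⟨Gz, hGz, hzG, hGzU⟩ := cover' z hz
        exact mk Gy hGy Gz hGz W0 hW0W hGyU hGzU hW0U
          (Set.mem_union_left _ (Set.mem_union_left _ hyG))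
          (Set.mem_union_left _ (Set.mem_union_right _ hzG))
      · -- St ∈ shW
        have hStW : St ∈ shW := ⟨hSt'.1, Set.nonempty_iff_ne_empty.mp
          ⟨w, hwSt, hwt, hwx⟩⟩
        rcases cover y hy with ⟨Gy, hGy, hyG, hGyU⟩ | hySt <;>
          rcases cover z hz with ⟨Gz, hGz, hzG, hGzU⟩ | hzSt
        · exact mk Gy hGy Gz hGz W0 hW0W hGyU hGzU hW0U
            (Set.mem_union_left _ (Set.mem_union_left _ hyG))
            (Set.mem_union_left _ (Set.mem_union_right _ hzG))
        · exact mk Gy hGy Sx hSx St hStW hGyU hSxU hStU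
            (Set.mem_union_left _ (Set.mem_union_left _ hyG))
            (Set.mem_union_right _ hzSt)
        · exact mk Sx hSx Gz hGz St hStW hSxU hGzU hStU
            (Set.mem_union_right _ hySt)
            (Set.mem_union_left _ (Set.mem_union_right _ hzG))
        · exact mk Sx hSx Sx hSx St hStW hSxU hSxU hStU
            (Set.mem_union_right _ hySt) (Set.mem_union_right _ hzSt)
    exact Set.Subset.antisymm (rho_cover_subset VI _ _ h12) (rho_cover_subset VI _ _ h21)
end
end

section
/- Let ⟨sh, f, l⟩ ∈ SFL and put V = (VI \ vars(sh)) ∪ f. Then for every l' ⊆ VI with V ∪ l = V ∪ l', one has γ_S(⟨sh, f, l⟩) = γ_S(⟨sh, f, l'⟩); i.e., the concretization function does not distinguish linearity components that agree outside the set of variables that are ground or free according to the abstract element. -/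
open Classical

noncomputable section

/-- A substitution: a map from variables to finite terms that is the identity
almost everywhere. -/
structure Subst (Sig : Type) (ar : Sig → ℕ) (Vr : Type) where
  toFun : Vr → HTerm Sig ar Vr
  finite_dom : {x : Vr | toFun x ≠ HTerm.var x}.Finite

namespace Subst

variable {Sig : Type} {ar : Sig → ℕ} {Vr : Type}

/-- The domain of a substitution. -/
def dom (σ : Subst Sig ar Vr) : Set Vr := {x | σ.toFun x ≠ HTerm.var x}

/-- The number of bindings `#σ`. -/
def nb (σ : Subst Sig ar Vr) : ℕ := σ.finite_dom.toFinset.card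

/-- `iterApp σ i t` is `t σ^i`, the `i`-fold application of `σ` to `t`. -/
def iterApp (σ : Subst Sig ar Vr) (i : ℕ) (t : HTerm Sig ar Vr) : HTerm Sig ar Vr :=
  (HTerm.substApp σ.toFun)^[i] t

/-- `σ` has a circular subset `{x₁↦x₂, …, x_{n-1}↦xₙ, xₙ↦x₁}` with `n > 1`
distinct variables. -/
def HasCircularSubset (σ : Subst Sig ar Vr) : Prop :=
  ∃ n : ℕ, ∃ _h : 1 < n, ∃ x : Fin n → Vr, Function.Injective x ∧
    ∀ i : Fin n, σ.toFun (x i) = HTerm.var (x ⟨(i.1 + 1) % n, Nat.mod_lt _ (by omega)⟩)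

/-- `σ` is in rational solved form: it has no circular subset. -/
def IsRSubst (σ : Subst Sig ar Vr) : Prop := ¬ σ.HasCircularSubset

/-- The occurrence operator: `occ σ v = {y | v ∈ vars(y σ^n) \ dom σ}` where `n = #σ`. -/
def occ (σ : Subst Sig ar Vr) (v : Vr) : Set Vr :=
  {y | v ∈ (σ.iterApp σ.nb (HTerm.var y)).vars ∧ v ∉ σ.dom}

/-- The freeness operator: `fvars σ = {y | y σ^n ∈ Vars}` where `n = #σ`. -/
def fvars (σ : Subst Sig ar Vr) : Set Vr :=
  {y | ∃ z : Vr, σ.iterApp σ.nb (HTerm.var y) = HTerm.var z}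

/-- The groundness operator. -/
def gvars (σ : Subst Sig ar Vr) : Set Vr :=
  {y | y ∈ σ.dom ∧ ∀ v : Vr, y ∉ σ.occ v}

/-- The linearity operator: every non-domain variable of `y σ^n` occurs exactly
once in `y σ^{2n}`, where `n = #σ`. -/
def lvars (σ : Subst Sig ar Vr) : Set Vr :=
  {y | ∀ z ∈ (σ.iterApp σ.nb (HTerm.var y)).vars, z ∉ σ.dom →
        (σ.iterApp (2 * σ.nb) (HTerm.var y)).count z = 1}

/-- The sharing-sets operator: `ssets σ VI = {occ(σ,v) ∩ VI | v ∈ Vars} \ {∅}`. -/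
def ssets (σ : Subst Sig ar Vr) (VI : Set Vr) : Set (Set Vr) :=
  {g | (∃ v : Vr, g = σ.occ v ∩ VI) ∧ g ≠ ∅}

/-- The set of variables occurring in (the bindings of) a substitution. -/
def varsOf (σ : Subst Sig ar Vr) : Set Vr :=
  ⋃ x ∈ σ.dom, ({x} ∪ (σ.toFun x).vars)

end Subst

/-- The abstraction function `α_S` on a single substitution. -/
def alphaS {Sig : Type} {ar : Sig → ℕ} {Vr : Type} (VI : Set Vr)
    (σ : Subst Sig ar Vr) : SFLElem Vr :=
  ⟨σ.ssets VI, σ.fvars ∩ VI, σ.lvars ∩ VI⟩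

/-- The abstraction function `α_S` on a set of substitutions (the lub of the
pointwise abstractions). -/
def alphaSetS {Sig : Type} {ar : Sig → ℕ} {Vr : Type} (VI : Set Vr)
    (Ss : Set (Subst Sig ar Vr)) : SFLElem Vr :=
  ⟨⋃ σ ∈ Ss, σ.ssets VI,
   {x | x ∈ VI ∧ ∀ σ ∈ Ss, x ∈ σ.fvars},
   {x | x ∈ VI ∧ ∀ σ ∈ Ss, x ∈ σ.lvars}⟩

/-- The concretization function `γ_S`. -/
def gammaS (Sig : Type) (ar : Sig → ℕ) {Vr : Type} (VI : Set Vr)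
    (d : SFLElem Vr) : Set (Subst Sig ar Vr) :=
  {σ | σ.IsRSubst ∧ σ.ssets VI ⊆ d.sh ∧ d.f ⊆ σ.fvars ∧ d.l ⊆ σ.lvars}

section Aux

variable {Sig : Type} {ar : Sig → ℕ} {Vr : Type}

lemma iterApp_var_of_not_dom (σ : Subst Sig ar Vr) {x : Vr} (hx : x ∉ σ.dom) (m : ℕ) :
    σ.iterApp m (HTerm.var x) = HTerm.var x := by
  induction m with
  | zero => rfl
  | succ k ih =>
    have hfix : σ.toFun x = HTerm.var x := by
      by_contra h; exact hx h
    unfold Subst.iterApp at *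
    rw [Function.iterate_succ_apply, show HTerm.substApp σ.toFun (HTerm.var x) = σ.toFun x from rfl,
      hfix, ih]

lemma fvars_subset_lvars (σ : Subst Sig ar Vr) : σ.fvars ⊆ σ.lvars := by
  rintro x ⟨z, hz⟩ w hw hwd
  have hwz : w = z := by
    rw [hz] at hw; exact hw
  subst hwz
  have h2 : σ.iterApp (2 * σ.nb) (HTerm.var x) = HTerm.var w := by
    have : σ.iterApp (2 * σ.nb) (HTerm.var x)
        = σ.iterApp σ.nb (σ.iterApp σ.nb (HTerm.var x)) := by
      unfold Subst.iterApp
      rw [two_mul, Function.iterate_add_apply]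
    rw [this, hz, iterApp_var_of_not_dom σ hwd]
  rw [h2]
  simp [HTerm.count]

lemma ground_mem_lvars (σ : Subst Sig ar Vr) {VI : Set Vr} {sh : Set (Set Vr)}
    (hss : σ.ssets VI ⊆ sh) {x : Vr} (hxVI : x ∈ VI) (hx : x ∉ ⋃₀ sh) :
    x ∈ σ.lvars := by
  intro z hz hzd
  exfalso
  have hxocc : x ∈ σ.occ z := ⟨hz, hzd⟩
  have hne : σ.occ z ∩ VI ≠ ∅ := by
    intro h
    have : x ∈ σ.occ z ∩ VI := ⟨hxocc, hxVI⟩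
    rw [h] at this; exact this
  have : σ.occ z ∩ VI ∈ sh := hss ⟨⟨z, rfl⟩, hne⟩
  exact hx ⟨_, this, ⟨hxocc, hxVI⟩⟩

lemma V_union_subset_lvars (σ : Subst Sig ar Vr) {VI : Set Vr} {sh : Set (Set Vr)}
    {f : Set Vr} (hss : σ.ssets VI ⊆ sh) (hf : f ⊆ σ.fvars) :
    (VI \ ⋃₀ sh) ∪ f ⊆ σ.lvars := by
  rintro x (⟨hxVI, hx⟩ | hxf)
  · exact ground_mem_lvars σ hss hxVI hx
  · exact fvars_subset_lvars σ (hf hxf)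

end Aux

/-- The concretization function does not distinguish
linearity components that agree outside the set of variables that are
ground or free according to the abstract element. -/
theorem gammaS_eq_of_linearity_agrees
    {Sig Vr : Type} {ar : Sig → ℕ} [Denumerable Vr]
    (_hSig : ∃ a b : Sig, a ≠ b ∧ ar a = 0)
    (VI : Set Vr) (_hVI : VI.Finite)
    (sh : Set (Set Vr)) (f l l' : Set Vr)
    (_hwf : SFLElem.WF VI ⟨sh, f, l⟩) (_hl' : l' ⊆ VI)
    (_hV : ((VI \ ⋃₀ sh) ∪ f) ∪ l = ((VI \ ⋃₀ sh) ∪ f) ∪ l') :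
    gammaS Sig ar VI ⟨sh, f, l⟩ = gammaS Sig ar VI ⟨sh, f, l'⟩ := by
  ext σ
  constructor
  · rintro ⟨hr, hss, hf, hl⟩
    refine ⟨hr, hss, hf, ?_⟩
    have hV : (VI \ ⋃₀ sh ∪ f) ⊆ σ.lvars := V_union_subset_lvars σ hss hf
    intro x hx
    have : x ∈ ((VI \ ⋃₀ sh) ∪ f) ∪ l := by
      rw [_hV]; exact Or.inr hx
    rcases this with h | h
    · exact hV h
    · exact hl h
  · rintro ⟨hr, hss, hf, hl⟩
    refine ⟨hr, hss, hf, ?_⟩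
    have hV : (VI \ ⋃₀ sh ∪ f) ⊆ σ.lvars := V_union_subset_lvars σ hss hf
    intro x hx
    have : x ∈ ((VI \ ⋃₀ sh) ∪ f) ∪ l' := by
      rw [← _hV]; exact Or.inr hx
    rcases this with h | h
    · exact hV h
    · exact hl h
end
end

section
/- Let σ ∈ RSubst and n = #σ. If y ∈ fvars(σ), then yσ^n is a variable not in dom(σ), i.e., yσ^n ∈ Vars \ dom(σ). -/
open Classical

noncomputable section

section AuxLemmas

variable {Sig : Type} {ar : Sig → ℕ} {Vr : Type}

lemma iter_substApp_app_ne_var (σ : Vr → HTerm Sig ar Vr) (j : ℕ) (f : Sig)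
    (ts : Fin (ar f) → HTerm Sig ar Vr) (z : Vr) :
    (HTerm.substApp σ)^[j] (HTerm.app f ts) ≠ HTerm.var z := by
  induction j generalizing ts with
  | zero => simp
  | succ j ih =>
    rw [Function.iterate_succ_apply]
    exact ih _

lemma iter_substApp_var_of_le (σ : Vr → HTerm Sig ar Vr) {t : HTerm Sig ar Vr} {z : Vr}
    {i k : ℕ} (hik : i ≤ k) (h : (HTerm.substApp σ)^[k] t = HTerm.var z) :
    ∃ w, (HTerm.substApp σ)^[i] t = HTerm.var w := by
  obtain ⟨j, rfl⟩ := Nat.exists_eq_add_of_le hik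
  rw [Nat.add_comm, Function.iterate_add_apply] at h
  cases hu : (HTerm.substApp σ)^[i] t with
  | var w => exact ⟨w, rfl⟩
  | app f ts =>
    rw [hu] at h
    exact absurd h (iter_substApp_app_ne_var σ j f ts z)

end AuxLemmas

/-- If `σ ∈ RSubst`, `n = #σ` and `y ∈ fvars(σ)`, then
`y σ^n` is a variable not in `dom(σ)`. -/
theorem fvars_iter_not_mem_dom
    {Sig Vr : Type} {ar : Sig → ℕ} [Denumerable Vr]
    (σ : Subst Sig ar Vr) (_hσ : σ.IsRSubst)
    (y : Vr) (_hy : y ∈ σ.fvars) :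
    ∃ z : Vr, σ.iterApp σ.nb (HTerm.var y) = HTerm.var z ∧ z ∉ σ.dom := by
  obtain ⟨z, hz⟩ := _hy
  set n := σ.nb with hn
  refine ⟨z, hz, ?_⟩
  -- a chain of variables
  have hex : ∀ i ≤ n, ∃ w, σ.iterApp i (HTerm.var y) = HTerm.var w := fun i hi =>
    iter_substApp_var_of_le σ.toFun hi hz
  set x : ℕ → Vr := fun i =>
    if h : ∃ w, σ.iterApp i (HTerm.var y) = HTerm.var w then h.choose else y with hxdef
  have hx : ∀ i ≤ n, σ.iterApp i (HTerm.var y) = HTerm.var (x i) := by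
    intro i hi
    have h := hex i hi
    simp only [hxdef, dif_pos h]
    exact h.choose_spec
  have hxn : x n = z := by
    have := hx n le_rfl
    rw [hz] at this
    exact (HTerm.var.injEq _ _).mp this.symm
  have hstep : ∀ i < n, σ.toFun (x i) = HTerm.var (x (i + 1)) := by
    intro i hi
    have h1 := hx i (Nat.le_of_lt hi)
    have h2 := hx (i + 1) hi
    rw [Subst.iterApp, Function.iterate_succ_apply'] at h2
    rw [Subst.iterApp] at h1
    rw [h1] at h2
    exact h2
  by_cases hc : ∃ i < n, x i = x (i + 1)
  · -- chain stabilizes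
    obtain ⟨i, hi, he⟩ := hc
    have hfix : σ.toFun (x i) = HTerm.var (x i) := by
      rw [hstep i hi, ← he]
    have hstab : ∀ j, i ≤ j → j ≤ n → x j = x i := by
      intro j hij
      induction j, hij using Nat.le_induction with
      | base => intro _; rfl
      | succ j hij ih =>
        intro hjn
        have hj : j < n := Nat.lt_of_succ_le hjn
        have := hstep j hj
        rw [ih (Nat.le_of_lt hj), hfix] at this
        exact (HTerm.var.injEq _ _).mp this.symm
    have : z = x i := by rw [← hxn]; exact hstab n (Nat.le_of_lt hi) le_rfl
    intro hdom
    exact hdom (by rw [this, hfix])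
  · push_neg at hc
    -- all chain elements are in dom; pigeonhole gives a cycle
    intro hzdom
    have hdom : ∀ i ≤ n, x i ∈ σ.dom := by
      intro i hi
      rcases Nat.lt_or_ge i n with h | h
      · intro habs
        have := hstep i h
        rw [habs] at this
        exact hc i h ((HTerm.var.injEq _ _).mp this.symm).symm
      · have : i = n := le_antisymm hi h
        rw [this, hxn]; exact hzdom
    -- pigeonhole
    have hcard : σ.finite_dom.toFinset.card < (Finset.range (n + 1)).card := by
      simp [Subst.nb] at hn ⊢
      omega
    have hmaps : ∀ i ∈ Finset.range (n + 1), x i ∈ σ.finite_dom.toFinset := by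
      intro i hi
      rw [Set.Finite.mem_toFinset]
      exact hdom i (Nat.lt_succ_iff.mp (Finset.mem_range.mp hi))
    obtain ⟨a, ha, b, hb, hab, heq⟩ :=
      Finset.exists_ne_map_eq_of_card_lt_of_maps_to hcard hmaps
    rw [Finset.mem_range] at ha hb
    -- a repeat with positive distance exists
    have hS : ∃ d, 0 < d ∧ ∃ i, i + d ≤ n ∧ x i = x (i + d) := by
      rcases Nat.lt_or_ge a b with h | h
      · exact ⟨b - a, by omega, a, by omega, by rw [heq]; congr 1; omega⟩
      · have h' : b < a := lt_of_le_of_ne h (Ne.symm hab)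
        exact ⟨a - b, by omega, b, by omega, by rw [← heq]; congr 1; omega⟩
    set d0 := Nat.find hS with hd0
    have hspec := Nat.find_spec hS
    rw [← hd0] at hspec
    obtain ⟨hd0pos, i0, hi0n, hcyc⟩ := hspec
    have hd0two : 1 < d0 := by
      rcases Nat.lt_or_ge 1 d0 with h | h
      · exact h
      · exfalso
        have : d0 = 1 := by omega
        rw [this] at hcyc hi0n
        exact hc i0 (by omega) hcyc
    -- distinctness within the cycle
    have hdist : ∀ a b, a < b → b < d0 → x (i0 + a) ≠ x (i0 + b) := by
      intro a b hab' hbd habs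
      have hmin := Nat.find_min hS (show b - a < d0 by omega)
      exact hmin ⟨by omega, i0 + a, by omega, by rw [habs]; congr 1; omega⟩
    apply _hσ
    refine ⟨d0, hd0two, fun k => x (i0 + k.1), ?_, ?_⟩
    · intro k l hkl
      by_contra hne
      have hne' : k.1 ≠ l.1 := fun h => hne (Fin.ext h)
      rcases Nat.lt_or_ge k.1 l.1 with h | h
      · exact hdist k.1 l.1 h l.2 hkl
      · exact hdist l.1 k.1 (by omega) k.2 hkl.symm
    · intro k
      rcases Nat.lt_or_ge (k.1 + 1) d0 with h | h
      · have hmod : (k.1 + 1) % d0 = k.1 + 1 := Nat.mod_eq_of_lt h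
        have := hstep (i0 + k.1) (by omega)
        simp only [hmod]
        rw [this]
        congr 1
      · have hk : k.1 + 1 = d0 := by omega
        have hmod : (k.1 + 1) % d0 = 0 := by rw [hk]; exact Nat.mod_self d0
        have := hstep (i0 + k.1) (by omega)
        simp only [hmod]
        rw [this, show i0 + k.1 + 1 = i0 + d0 by omega, ← hcyc, Nat.add_zero]
end
end

section
/- Let d = ⟨sh, f, l⟩ ∈ SFL and let (x ↦ t) be a binding with {x} ∪ vars(t) ⊆ VI and x ∉ vars(t). With sh_- and sh'' as in the definition of amgu_S (for any of its five cases), the cyclic operator is the identity: cyclic_x^t(sh_- ∪ sh'') = sh_- ∪ sh''. -/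
open Classical

noncomputable section

/-- For a non-cyclic binding (`x ∉ vars(t)`), the `cyclic`
operator is the identity on `sh_- ∪ sh''`, for any of the five cases of
`sh''` in the definition of `amgu_S`. -/
theorem cyclicSH_eq_self_of_not_mem_vars
    {Sig Vr : Type} {ar : Sig → ℕ}
    (VI : Set Vr) (_hVI : VI.Finite)
    (d : SFLElem Vr) (_hd : d.WF VI)
    (x : Vr) (t : HTerm Sig ar Vr)
    (_hxt : insert x t.vars ⊆ VI) (_hb : t ≠ HTerm.var x)
    (_hnocc : x ∉ t.vars) :
    let sh := d.sh
    let shx := relSH {x} sh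
    let sht := relSH t.vars sh
    let shxt := shx ∩ sht
    let shm := nrelSH ({x} ∪ t.vars) sh
    ∀ sh'' ∈ ({binSH shx sht,
               binSH (shx ∪ binSH shx (starSH VI shxt))
                     (sht ∪ binSH sht (starSH VI shxt)),
               binSH (starSH VI shx) sht,
               binSH shx (starSH VI sht),
               binSH (starSH VI shx) (starSH VI sht)} : Set (Set (Set Vr))),
      cyclicSH x t (shm ∪ sh'') = shm ∪ sh'' := by
  intro sh shx sht shxt shm sh'' hmem
  -- every element of sht meets t.vars
  have hsht : ∀ S ∈ sht, S ∩ t.vars ≠ ∅ := fun S hS => hS.2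
  -- star preserves meeting t.vars
  have hstar0 : ∀ (B : Set (Set Vr)), (∀ S ∈ B, S ∩ t.vars ≠ ∅) →
      ∀ S ∈ starSH VI B, S ∩ t.vars ≠ ∅ := by
    rintro B hB S ⟨_, F, _, ⟨U, hU⟩, hFsub, rfl⟩
    have hUm := hB U (hFsub hU)
    intro h
    exact hUm (Set.eq_empty_of_subset_empty (by
      rw [← h]; exact Set.inter_subset_inter_left _ (Set.subset_sUnion_of_mem hU)))
  have hstar : ∀ S ∈ starSH VI sht, S ∩ t.vars ≠ ∅ := hstar0 sht hsht
  have hxt : ∀ S ∈ (shxt : Set (Set Vr)), S ∩ t.vars ≠ ∅ := fun S hS => hsht S hS.2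
  -- bin with second component meeting t.vars meets t.vars
  have hbin : ∀ (A B : Set (Set Vr)), (∀ S ∈ B, S ∩ t.vars ≠ ∅) →
      ∀ S ∈ binSH A B, S ∩ t.vars ≠ ∅ := by
    rintro A B hB S ⟨S1, _, S2, hS2, rfl⟩
    have := hB S2 hS2
    intro h
    exact this (Set.eq_empty_of_subset_empty (by
      rw [← h]; exact Set.inter_subset_inter_left _ Set.subset_union_right))
  -- key: every element of sh'' meets t.vars
  have key : ∀ G ∈ sh'', G ∩ t.vars ≠ ∅ := by
    simp only [Set.mem_insert_iff, Set.mem_singleton_iff] at hmem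
    rcases hmem with rfl | rfl | rfl | rfl | rfl
    · exact hbin _ _ hsht
    · refine hbin _ _ ?_
      rintro S (hS | hS)
      · exact hsht S hS
      · exact hbin _ _ (hstar0 shxt hxt) S hS
    · exact hbin _ _ hsht
    · exact hbin _ _ hstar
    · exact hbin _ _ hstar
  -- conclude
  have htx : t.vars \ {x} = t.vars := by
    ext a; simp only [Set.mem_diff, Set.mem_singleton_iff, and_iff_left_iff_imp]
    rintro ha rfl; exact _hnocc ha
  ext G
  constructor
  · rintro (hG | hG)
    · exact hG.1
    · exact hG.1
  · rintro (hG | hG)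
    · left
      refine ⟨Or.inl hG, ?_⟩
      intro hrel
      exact hG.2 ⟨hG.1, hrel.2⟩
    · right
      refine ⟨Or.inr hG, ?_⟩
      rw [htx]
      exact key G hG
end
end
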